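/- For a simple stopping time, E_S := Σ_{i=1}^{N} E_{t_i} ΔS_i is a conditional expectation: it is a strictly positive, order continuous, positive linear projection on E with E_S(e) = e, where (ΔS_i) are pairwise disjoint band projections with Σ_i ΔS_i = I and each ΔS_i commutes with E_{t_i}. -/

import Mathlib

variable {E : Type*} [AddCommGroup E] [Lattice E]
  [CovariantClass E E (· + ·) (· ≤ ·)] [Module ℝ E]

/-- `E` is Dedekind complete. -/
def DedekindComplete (E : Type*) [AddCommGroup E] [Lattice E] : Prop :=
  ∀ A : Set E, A.Nonempty → BddAbove A → ∃ s, IsLUB A s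

/-- `e` is a weak order unit. -/
def IsWeakUnit (e : E) : Prop :=
  0 < e ∧ ∀ x : E, 0 ≤ x → IsLUB (Set.range fun n : ℕ => x ⊓ n • e) x

/-- A band (order) projection. -/
def IsBandProj (P : E →ₗ[ℝ] E) : Prop :=
  (∀ x, P (P x) = P x) ∧ ∀ x : E, 0 ≤ x → 0 ≤ P x ∧ P x ≤ x

/-- A conditional expectation with respect to the weak order unit `e`. -/
def IsCondExp (e : E) (F : E →ₗ[ℝ] E) : Prop :=
  (∀ x, F (F x) = F x) ∧ (∀ x : E, 0 < x → 0 < F x) ∧ F e = e ∧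
  ∀ V : ℕ → E, Antitone V → IsGLB (Set.range V) 0 →
    IsGLB (Set.range fun n => F (V n)) 0

/-!
A band projection `P` commutes with a conditional expectation `T` as soon as `T` fixes `P e`:
an element `y` of the band of `P` with `y ≤ n • e` lies below `n • P e`, which `T` fixes, so
`T y` stays in the band; order continuity of `T` along `y ⊓ n • e ↑ y` extends this to the whole
band, and applying the same to the complementary projection `I - P` gives `P T = T P`.
For `i ≤ j` the filtration property shows that `E_{t_j}` fixes `ΔS_i e = E_{t_i} ΔS_i e`, so
`ΔS_i` commutes with every later `E_{t_j}`. Together with disjointness of the `ΔS_i` this gives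
`ΔS_i E_S = E_{t_i} ΔS_i`, whence `E_S² = E_S`; the other properties of `E_S` hold termwise.
-/

open Set

lemma isGLB_range_zero_of_le {α G : Type*} [Zero G] [Preorder G] {f g : α → G}
    (hf : ∀ a, 0 ≤ f a) (hfg : ∀ a, f a ≤ g a) (hg : IsGLB (range g) 0) :
    IsGLB (range f) 0 :=
  ⟨by rintro _ ⟨a, rfl⟩; exact hf a,
    fun c hc => hg.2 (by rintro _ ⟨a, rfl⟩; exact (hc ⟨a, rfl⟩).trans (hfg a))⟩

section OrderedGroup

variable {G : Type*} [AddCommGroup G] [PartialOrder G] [AddLeftMono G]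

lemma isGLB_range_add_zero {α : Type*} [SemilatticeSup α] {f g : α → G}
    (hf : Antitone f) (hg : Antitone g) (hf0 : IsGLB (range f) 0) (hg0 : IsGLB (range g) 0) :
    IsGLB (range fun a => f a + g a) 0 := by
  refine ⟨by rintro _ ⟨a, rfl⟩; exact add_nonneg (hf0.1 ⟨a, rfl⟩) (hg0.1 ⟨a, rfl⟩),
    fun c hc => ?_⟩
  have hcf : ∀ a, c - f a ≤ 0 := fun a => hg0.2 <| by
    rintro _ ⟨b, rfl⟩
    rw [sub_le_iff_le_add']
    exact (hc ⟨a ⊔ b, rfl⟩).trans (add_le_add (hf le_sup_left) (hg le_sup_right))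
  exact hf0.2 (by rintro _ ⟨a, rfl⟩; exact sub_nonpos.mp (hcf a))

lemma isGLB_range_sum_zero {α ι : Type*} [SemilatticeSup α] [Nonempty α] (s : Finset ι)
    {f : ι → α → G} (hf : ∀ i ∈ s, Antitone (f i)) (hf0 : ∀ i ∈ s, IsGLB (range (f i)) 0) :
    IsGLB (range fun a => ∑ i ∈ s, f i a) 0 := by
  classical
  induction s using Finset.induction_on with
  | empty => simp [range_const, isGLB_singleton]
  | insert i s hi ih =>
    simp only [Finset.sum_insert hi]
    exact isGLB_range_add_zero (hf i (s.mem_insert_self i))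
      (Antitone.finsetSum fun j hj => hf j (Finset.mem_insert_of_mem hj))
      (hf0 i (s.mem_insert_self i))
      (ih (fun j hj => hf j (Finset.mem_insert_of_mem hj))
        (fun j hj => hf0 j (Finset.mem_insert_of_mem hj)))

end OrderedGroup

namespace IsWeakUnit

variable {X : Type*} [AddCommGroup X] [Lattice X] [AddLeftMono X] {e : X}

lemma antitone_sub_inf_nsmul (he : IsWeakUnit e) (y : X) :
    Antitone fun n : ℕ => y - y ⊓ n • e :=
  fun _ _ hnm => sub_le_sub_left (inf_le_inf_left y (nsmul_le_nsmul_left he.1.le hnm)) y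

lemma isGLB_sub_inf_nsmul (he : IsWeakUnit e) {y : X} (hy : 0 ≤ y) :
    IsGLB (range fun n : ℕ => y - y ⊓ n • e) 0 := by
  refine ⟨by rintro _ ⟨n, rfl⟩; exact sub_nonneg.mpr inf_le_left, fun c hc => ?_⟩
  have hy_le : y ≤ y - c :=
    (he.2 y hy).2 (by rintro _ ⟨n, rfl⟩; exact le_sub_comm.mp (hc ⟨n, rfl⟩))
  exact (le_sub_self_iff y).mp hy_le

end IsWeakUnit

section PositiveOperators

variable {X : Type*} [AddCommGroup X] [Lattice X] [Module ℝ X] {e : X} {P T : X →ₗ[ℝ] X}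

lemma IsCondExp.map_nonneg (hT : IsCondExp e T) {x : X} (hx : 0 ≤ x) : 0 ≤ T x := by
  rcases hx.eq_or_lt with rfl | hx
  · rw [map_zero]
  · exact (hT.2.1 x hx).le

lemma IsBandProj.map_nonneg (hP : IsBandProj P) {x : X} (hx : 0 ≤ x) : 0 ≤ P x := (hP.2 x hx).1

lemma IsBandProj.map_le_self (hP : IsBandProj P) {x : X} (hx : 0 ≤ x) : P x ≤ x := (hP.2 x hx).2

variable [AddLeftMono X]

lemma LinearMap.monotone_of_map_nonneg (hT : ∀ x, 0 ≤ x → 0 ≤ T x) : Monotone T :=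
  fun x y h => sub_nonneg.mp (by simpa using hT _ (sub_nonneg.mpr h))

lemma IsCondExp.monotone (hT : IsCondExp e T) : Monotone T :=
  LinearMap.monotone_of_map_nonneg fun _ => hT.map_nonneg

lemma IsBandProj.monotone (hP : IsBandProj P) : Monotone P :=
  LinearMap.monotone_of_map_nonneg fun _ => hP.map_nonneg

end PositiveOperators

namespace IsBandProj

variable {X : Type*} [AddCommGroup X] [Lattice X] [AddLeftMono X] [Module ℝ X] {e : X}
  {P T : X →ₗ[ℝ] X}

lemma id_sub (hP : IsBandProj P) : IsBandProj (LinearMap.id - P) := by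
  refine ⟨fun x => ?_, fun x hx => ?_⟩
  · simp [hP.1]
  · simp [hP.map_le_self hx, hP.map_nonneg hx]

lemma map_eq_self_of_le (hP : IsBandProj P) {y z : X} (hy : 0 ≤ y) (hyz : y ≤ z)
    (hz : P z = z) : P y = y := by
  refine le_antisymm (hP.map_le_self hy) ?_
  have h := hP.map_le_self (sub_nonneg.mpr hyz)
  rwa [map_sub, hz, sub_le_sub_iff_left] at h

lemma map_condExp_of_le_nsmul (hP : IsBandProj P) (hT : IsCondExp e T)
    (hTPe : T (P e) = P e) {y : X} {n : ℕ} (hy : 0 ≤ y) (hPy : P y = y) (hyn : y ≤ n • e) :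
    P (T y) = T y := by
  have hy_le : y ≤ n • P e := by simpa [hPy] using hP.monotone hyn
  refine hP.map_eq_self_of_le (hT.map_nonneg hy) ?_ (z := n • P e) (by rw [map_nsmul, hP.1])
  simpa [hTPe] using hT.monotone hy_le

lemma map_condExp_map_of_nonneg (hP : IsBandProj P) (he : IsWeakUnit e) (hT : IsCondExp e T)
    (hTPe : T (P e) = P e) {x : X} (hx : 0 ≤ x) : P (T (P x)) = T (P x) := by
  set y := P x
  have hy : 0 ≤ y := hP.map_nonneg hx
  have hPy : P y = y := hP.1 x
  have hgap : ∀ n : ℕ, T y - P (T y) ≤ T (y - y ⊓ n • e) := fun n => by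
    have hyn : 0 ≤ y ⊓ n • e := le_inf hy (nsmul_nonneg he.1.le n)
    have hfix : P (T (y ⊓ n • e)) = T (y ⊓ n • e) :=
      hP.map_condExp_of_le_nsmul hT hTPe hyn (hP.map_eq_self_of_le hyn inf_le_left hPy)
        inf_le_right
    have hrest : 0 ≤ y - y ⊓ n • e := sub_nonneg.mpr inf_le_left
    calc T y - P (T y) = T (y - y ⊓ n • e) - P (T (y - y ⊓ n • e)) := by
          simp only [map_sub, hfix]; abel
      _ ≤ T (y - y ⊓ n • e) := sub_le_self _ (hP.map_nonneg (hT.map_nonneg hrest))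
  have hgap_le : T y - P (T y) ≤ 0 :=
    (hT.2.2.2 _ (he.antitone_sub_inf_nsmul y) (he.isGLB_sub_inf_nsmul hy)).2
      (by rintro _ ⟨n, rfl⟩; exact hgap n)
  exact le_antisymm (hP.map_le_self (hT.map_nonneg hy)) (sub_nonpos.mp hgap_le)

lemma map_condExp_map (hP : IsBandProj P) (he : IsWeakUnit e) (hT : IsCondExp e T)
    (hTPe : T (P e) = P e) (x : X) : P (T (P x)) = T (P x) := by
  rw [← posPart_sub_negPart x]
  simp only [map_sub, hP.map_condExp_map_of_nonneg he hT hTPe (posPart_nonneg x),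
    hP.map_condExp_map_of_nonneg he hT hTPe (negPart_nonneg x)]

theorem commute_condExp (hP : IsBandProj P) (he : IsWeakUnit e) (hT : IsCondExp e T)
    (hTPe : T (P e) = P e) (x : X) : P (T x) = T (P x) := by
  have hTQe : T ((LinearMap.id - P : X →ₗ[ℝ] X) e) = (LinearMap.id - P : X →ₗ[ℝ] X) e := by
    simp [hT.2.2.1, hTPe]
  have h := hP.id_sub.map_condExp_map he hT hTQe x
  simpa [hP.map_condExp_map he hT hTPe x] using h

end IsBandProj

section StoppedExpectation

variable {R M ι : Type*} [Semiring R] [AddCommMonoid M] [Module R M] [Fintype ι]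
  {Et ΔS : ι → M →ₗ[R] M}

lemma apply_sum_apply_apply [LinearOrder ι] (hΔS : ∀ i x, ΔS i (ΔS i x) = ΔS i x)
    (hSdisj : ∀ i j, i ≠ j → ∀ x, ΔS i (ΔS j x) = 0)
    (hcomm : ∀ i j, i ≤ j → ∀ x, ΔS i (Et j x) = Et j (ΔS i x)) (i : ι) (x : M) :
    ΔS i (∑ j, Et j (ΔS j x)) = Et i (ΔS i x) := by
  have hoff : ∀ j, j ≠ i → ΔS i (Et j (ΔS j x)) = 0 := fun j hji => by
    rcases hji.lt_or_gt with hlt | hlt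
    · rw [← hcomm j j le_rfl, hSdisj i j hlt.ne']
    · rw [hcomm i j hlt.le, hSdisj i j hlt.ne, map_zero]
  rw [map_sum, Finset.sum_eq_single_of_mem i (Finset.mem_univ i) fun j _ => hoff j,
    hcomm i i le_rfl, hΔS]

lemma sum_comp_idempotent [LinearOrder ι] (hEt : ∀ i x, Et i (Et i x) = Et i x)
    (hΔS : ∀ i x, ΔS i (ΔS i x) = ΔS i x) (hSdisj : ∀ i j, i ≠ j → ∀ x, ΔS i (ΔS j x) = 0)
    (hcomm : ∀ i j, i ≤ j → ∀ x, ΔS i (Et j x) = Et j (ΔS i x)) (x : M) :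
    (∑ i, Et i ∘ₗ ΔS i) ((∑ i, Et i ∘ₗ ΔS i) x) = (∑ i, Et i ∘ₗ ΔS i) x := by
  simp only [LinearMap.sum_apply, LinearMap.comp_apply, apply_sum_apply_apply hΔS hSdisj hcomm,
    hEt]

lemma sum_comp_apply_eq_self {e : M} (hEt : ∀ i, Et i e = e)
    (hScomm : ∀ i x, ΔS i (Et i x) = Et i (ΔS i x)) (hSsum : ∀ x, ∑ i, ΔS i x = x) :
    (∑ i, Et i ∘ₗ ΔS i) e = e := by
  simp only [LinearMap.sum_apply, LinearMap.comp_apply, ← hScomm, hEt, hSsum]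

end StoppedExpectation

section StoppedExpectationOrder

variable {X ι : Type*} [AddCommGroup X] [Lattice X] [AddLeftMono X] [Module ℝ X] [Fintype ι]
  {e : X} {Et ΔS : ι → X →ₗ[ℝ] X}

lemma sum_comp_pos (hEt : ∀ i, IsCondExp e (Et i)) (hΔS : ∀ i, IsBandProj (ΔS i))
    (hSsum : ∀ x, ∑ i, ΔS i x = x) {x : X} (hx : 0 < x) : 0 < (∑ i, Et i ∘ₗ ΔS i) x := by
  obtain ⟨i, hi⟩ : ∃ i, ΔS i x ≠ 0 := by
    by_contra! h
    exact hx.ne' (by rw [← hSsum x]; simp [h])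
  have hterm : 0 < Et i (ΔS i x) := (hEt i).2.1 _ (((hΔS i).map_nonneg hx.le).lt_of_ne' hi)
  simp only [LinearMap.sum_apply, LinearMap.comp_apply]
  exact hterm.trans_le (Finset.single_le_sum (f := fun j => Et j (ΔS j x))
    (fun j _ => (hEt j).map_nonneg ((hΔS j).map_nonneg hx.le)) (Finset.mem_univ i))

lemma isGLB_range_sum_comp (hEt : ∀ i, IsCondExp e (Et i)) (hΔS : ∀ i, IsBandProj (ΔS i))
    {V : ℕ → X} (hV : Antitone V) (hV0 : IsGLB (range V) 0) :
    IsGLB (range fun n => (∑ i, Et i ∘ₗ ΔS i) (V n)) 0 := by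
  have hVnn : ∀ n, 0 ≤ V n := fun n => hV0.1 ⟨n, rfl⟩
  refine isGLB_range_zero_of_le (g := fun n => ∑ i, Et i (V n)) (fun n => ?_) (fun n => ?_)
    (isGLB_range_sum_zero _ (fun i _ => (hEt i).monotone.comp_antitone hV)
      (fun i _ => (hEt i).2.2.2 V hV hV0))
  all_goals simp only [LinearMap.sum_apply, LinearMap.comp_apply]
  · exact Finset.sum_nonneg fun i _ => (hEt i).map_nonneg ((hΔS i).map_nonneg (hVnn n))
  · exact Finset.sum_le_sum fun i _ => (hEt i).monotone ((hΔS i).map_le_self (hVnn n))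

end StoppedExpectationOrder

theorem simple_stopping_time_condExp_general
    (e : E) (he : IsWeakUnit e)
    (N : ℕ) (Et : Fin N → (E →ₗ[ℝ] E))
    (hEt : ∀ i, IsCondExp e (Et i))
    (hfiltr : ∀ i j : Fin N, i ≤ j → ∀ x : E,
      Et i (Et j x) = Et i x ∧ Et j (Et i x) = Et i x)
    (ΔS : Fin N → (E →ₗ[ℝ] E))
    (hΔS : ∀ i, IsBandProj (ΔS i))
    (hSdisj : ∀ i j, i ≠ j → ∀ x : E, ΔS i (ΔS j x) = 0)
    (hSsum : ∀ x : E, ∑ i, ΔS i x = x)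
    (hScomm : ∀ i, ∀ x : E, ΔS i (Et i x) = Et i (ΔS i x)) :
    IsCondExp e (∑ i, (Et i) ∘ₗ (ΔS i)) := by
  have hfix : ∀ i j, i ≤ j → Et j (ΔS i e) = ΔS i e := fun i j hij => by
    have h : Et i (ΔS i e) = ΔS i e := by rw [← hScomm, (hEt i).2.2.1]
    rw [← h, (hfiltr i j hij _).2]
  have hcomm : ∀ i j, i ≤ j → ∀ x, ΔS i (Et j x) = Et j (ΔS i x) := fun i j hij =>
    (hΔS i).commute_condExp he (hEt j) (hfix i j hij)
  exact ⟨sum_comp_idempotent (fun i => (hEt i).1) (fun i => (hΔS i).1) hSdisj hcomm,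
    fun _ => sum_comp_pos hEt hΔS hSsum,
    sum_comp_apply_eq_self (fun i => (hEt i).2.2.1) hScomm hSsum,
    fun _ => isGLB_range_sum_comp hEt hΔS⟩

/-- For a simple stopping time, `E_S = ∑ i, E_{t i} ∘ ΔS i` is a conditional
expectation: an idempotent, positive, strictly positive, order continuous linear
map fixing the weak order unit `e`. -/
theorem simple_stopping_time_condExp
    (hE : DedekindComplete E) (e : E) (he : IsWeakUnit e)
    (N : ℕ) (Et : Fin N → (E →ₗ[ℝ] E))
    (hEt : ∀ i, IsCondExp e (Et i))
    (hfiltr : ∀ i j : Fin N, i ≤ j → ∀ x : E,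
      Et i (Et j x) = Et i x ∧ Et j (Et i x) = Et i x)
    (ΔS : Fin N → (E →ₗ[ℝ] E))
    (hΔS : ∀ i, IsBandProj (ΔS i))
    (hSdisj : ∀ i j, i ≠ j → ∀ x : E, ΔS i (ΔS j x) = 0)
    (hSsum : ∀ x : E, ∑ i, ΔS i x = x)
    (hScomm : ∀ i, ∀ x : E, ΔS i (Et i x) = Et i (ΔS i x)) :
    IsCondExp e (∑ i, (Et i) ∘ₗ (ΔS i)) :=
  simple_stopping_time_condExp_general e he N Et hEt hfiltr ΔS hΔS hSdisj hSsum hScomm
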